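/- Among all subsets of ℤ² of cardinality n², the n×n square uniquely (up to translation) maximizes the number of internal edges, i.e., the number of unordered pairs of points in the set at L¹ distance 1. -/

import Mathlib

/-- Adjacency (L¹ distance 1) in the 2D rectangular lattice. -/
def adj2 (p q : ℤ × ℤ) : Prop := (p.1 - q.1).natAbs + (p.2 - q.2).natAbs = 1

/-- The number of internal edges (unordered adjacent pairs) of a set `S ⊆ ℤ²`. -/
noncomputable def intEdges2 (S : Set (ℤ × ℤ)) : ℕ :=
  Set.ncard {e : Sym2 (ℤ × ℤ) | ∃ x ∈ S, ∃ y ∈ S, adj2 x y ∧ e = Sym2.mk x y}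

/-- The `n × n` square `{0,…,n−1}²` in `ℤ²`. -/
def square (n : ℕ) : Set (ℤ × ℤ) :=
  {p | 0 ≤ p.1 ∧ p.1 < n ∧ 0 ≤ p.2 ∧ p.2 < n}

open Set

namespace Stmt12Aux

lemma adj2_iff (x y : ℤ × ℤ) : adj2 x y ↔
    y = x + (1, 0) ∨ x = y + (1, 0) ∨ y = x + (0, 1) ∨ x = y + (0, 1) := by
  rcases x with ⟨a, b⟩; rcases y with ⟨c, d⟩
  simp only [adj2, Prod.mk_add_mk, Prod.mk.injEq]
  omega

/-- Horizontal edge left endpoints. -/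
def hset (S : Set (ℤ × ℤ)) : Set (ℤ × ℤ) := {p | p ∈ S ∧ p + (1, 0) ∈ S}

/-- Vertical edge bottom endpoints. -/
def vset (S : Set (ℤ × ℤ)) : Set (ℤ × ℤ) := {p | p ∈ S ∧ p + (0, 1) ∈ S}

/-- Points with no left neighbour. -/
def lh (S : Set (ℤ × ℤ)) : Set (ℤ × ℤ) := {p | p ∈ S ∧ p - (1, 0) ∉ S}

/-- Points with no lower neighbour. -/
def lv (S : Set (ℤ × ℤ)) : Set (ℤ × ℤ) := {p | p ∈ S ∧ p - (0, 1) ∉ S}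

lemma edgeSet_eq (S : Set (ℤ × ℤ)) :
    {e : Sym2 (ℤ × ℤ) | ∃ x ∈ S, ∃ y ∈ S, adj2 x y ∧ e = Sym2.mk x y} =
      (fun p => Sym2.mk p (p + (1, 0))) '' hset S ∪
      (fun p => Sym2.mk p (p + (0, 1))) '' vset S := by
  ext e
  simp only [mem_setOf_eq, mem_union, mem_image, hset, vset]
  constructor
  · rintro ⟨x, hx, y, hy, hadj, rfl⟩
    rcases (adj2_iff x y).1 hadj with h | h | h | h
    · exact Or.inl ⟨x, ⟨hx, h ▸ hy⟩, by rw [← h]⟩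
    · refine Or.inl ⟨y, ⟨hy, h ▸ hx⟩, ?_⟩
      rw [← h]; exact (Sym2.eq_swap)
    · exact Or.inr ⟨x, ⟨hx, h ▸ hy⟩, by rw [← h]⟩
    · refine Or.inr ⟨y, ⟨hy, h ▸ hx⟩, ?_⟩
      rw [← h]; exact (Sym2.eq_swap)
  · rintro (⟨p, ⟨h1, h2⟩, rfl⟩ | ⟨p, ⟨h1, h2⟩, rfl⟩)
    · exact ⟨p, h1, p + (1, 0), h2, (adj2_iff _ _).2 (Or.inl rfl), rfl⟩
    · exact ⟨p, h1, p + (0, 1), h2, (adj2_iff _ _).2 (Or.inr (Or.inr (Or.inl rfl))), rfl⟩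

lemma intEdges2_eq (S : Set (ℤ × ℤ)) (hS : S.Finite) :
    intEdges2 S = (hset S).ncard + (vset S).ncard := by
  have hh : (hset S).Finite := hS.subset fun p hp => hp.1
  have hv : (vset S).Finite := hS.subset fun p hp => hp.1
  have inj1 : Set.InjOn (fun p => Sym2.mk p (p + (1, 0))) (hset S) := by
    intro p _ q _ h
    rcases Sym2.eq_iff.1 h with ⟨h1, _⟩ | ⟨h1, h2⟩
    · exact h1
    · rcases p with ⟨a, b⟩; rcases q with ⟨c, d⟩
      simp only [Prod.mk_add_mk, Prod.mk.injEq] at h1 h2 ⊢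
      omega
  have inj2 : Set.InjOn (fun p => Sym2.mk p (p + (0, 1))) (vset S) := by
    intro p _ q _ h
    rcases Sym2.eq_iff.1 h with ⟨h1, _⟩ | ⟨h1, h2⟩
    · exact h1
    · rcases p with ⟨a, b⟩; rcases q with ⟨c, d⟩
      simp only [Prod.mk_add_mk, Prod.mk.injEq] at h1 h2 ⊢
      omega
  have hdisj : Disjoint ((fun p => Sym2.mk p (p + (1, 0))) '' hset S)
      ((fun p => Sym2.mk p (p + (0, 1))) '' vset S) := by
    rw [Set.disjoint_left]
    rintro e ⟨p, _, rfl⟩ ⟨q, _, h⟩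
    rcases Sym2.eq_iff.1 h with ⟨h1, h2⟩ | ⟨h1, h2⟩ <;>
    · rcases p with ⟨a, b⟩; rcases q with ⟨c, d⟩
      simp only [Prod.mk_add_mk, Prod.mk.injEq] at h1 h2
      omega
  rw [intEdges2, edgeSet_eq, Set.ncard_union_eq hdisj (hh.image _) (hv.image _),
    Set.ncard_image_of_injOn inj1, Set.ncard_image_of_injOn inj2]

lemma hset_ncard (S : Set (ℤ × ℤ)) (hS : S.Finite) :
    (hset S).ncard = S.ncard - (lh S).ncard := by
  have himg : (fun p => p + (1, 0)) '' hset S = S \ lh S := by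
    ext q
    simp only [mem_image, hset, lh, mem_setOf_eq, mem_diff, not_and, not_not]
    constructor
    · rintro ⟨p, ⟨h1, h2⟩, rfl⟩
      exact ⟨h2, fun _ => by simpa using h1⟩
    · rintro ⟨h1, h2⟩
      exact ⟨q - (1, 0), ⟨h2 h1, by simpa using h1⟩, by simp⟩
  have : (hset S).ncard = ((fun p => p + (1, 0)) '' hset S).ncard :=
    (Set.ncard_image_of_injective _ (add_left_injective _)).symm
  rw [this, himg, Set.ncard_diff (fun p hp => hp.1) (hS.subset fun p hp => hp.1)]

lemma vset_ncard (S : Set (ℤ × ℤ)) (hS : S.Finite) :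
    (vset S).ncard = S.ncard - (lv S).ncard := by
  have himg : (fun p => p + (0, 1)) '' vset S = S \ lv S := by
    ext q
    simp only [mem_image, vset, lv, mem_setOf_eq, mem_diff, not_and, not_not]
    constructor
    · rintro ⟨p, ⟨h1, h2⟩, rfl⟩
      exact ⟨h2, fun _ => by simpa using h1⟩
    · rintro ⟨h1, h2⟩
      exact ⟨q - (0, 1), ⟨h2 h1, by simpa using h1⟩, by simp⟩
  have : (vset S).ncard = ((fun p => p + (0, 1)) '' vset S).ncard :=
    (Set.ncard_image_of_injective _ (add_left_injective _)).symm
  rw [this, himg, Set.ncard_diff (fun p hp => hp.1) (hS.subset fun p hp => hp.1)]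

/-- the `min in each row` map -/
noncomputable def gh (S : Set (ℤ × ℤ)) (y : ℤ) : ℤ × ℤ := (sInf {x | (x, y) ∈ S}, y)

noncomputable def gv (S : Set (ℤ × ℤ)) (x : ℤ) : ℤ × ℤ := (x, sInf {y | (x, y) ∈ S})

lemma gh_mem (S : Set (ℤ × ℤ)) (hS : S.Finite) :
    (gh S) '' (Prod.snd '' S) ⊆ lh S := by
  rintro _ ⟨y, ⟨p, hp, rfl⟩, rfl⟩
  have hfib : {x | (x, p.2) ∈ S}.Finite := by
    have : {x | (x, p.2) ∈ S} ⊆ Prod.fst '' S := fun x hx => ⟨(x, p.2), hx, rfl⟩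
    exact (hS.image _).subset this
  have hne : {x | (x, p.2) ∈ S}.Nonempty := ⟨p.1, by simpa using hp⟩
  have hmem : sInf {x | (x, p.2) ∈ S} ∈ {x | (x, p.2) ∈ S} := hne.csInf_mem hfib
  constructor
  · exact hmem
  · intro hcon
    have : sInf {x | (x, p.2) ∈ S} - 1 ∈ {x | (x, p.2) ∈ S} := by
      simpa [gh, Prod.ext_iff] using hcon
    have := csInf_le hfib.bddBelow this
    omega

lemma gh_injOn (S : Set (ℤ × ℤ)) : Set.InjOn (gh S) (Prod.snd '' S) := by
  intro a _ b _ h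
  simpa [gh, Prod.ext_iff] using (Prod.ext_iff.1 h).2

lemma gv_mem (S : Set (ℤ × ℤ)) (hS : S.Finite) :
    (gv S) '' (Prod.fst '' S) ⊆ lv S := by
  rintro _ ⟨x, ⟨p, hp, rfl⟩, rfl⟩
  have hfib : {y | (p.1, y) ∈ S}.Finite := by
    have : {y | (p.1, y) ∈ S} ⊆ Prod.snd '' S := fun y hy => ⟨(p.1, y), hy, rfl⟩
    exact (hS.image _).subset this
  have hne : {y | (p.1, y) ∈ S}.Nonempty := ⟨p.2, by simpa using hp⟩
  have hmem : sInf {y | (p.1, y) ∈ S} ∈ {y | (p.1, y) ∈ S} := hne.csInf_mem hfib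
  constructor
  · exact hmem
  · intro hcon
    have : sInf {y | (p.1, y) ∈ S} - 1 ∈ {y | (p.1, y) ∈ S} := by
      simpa [gv, Prod.ext_iff] using hcon
    have := csInf_le hfib.bddBelow this
    omega

lemma gv_injOn (S : Set (ℤ × ℤ)) : Set.InjOn (gv S) (Prod.fst '' S) := by
  intro a _ b _ h
  simpa [gv, Prod.ext_iff] using (Prod.ext_iff.1 h).1

lemma rows_le_lh (S : Set (ℤ × ℤ)) (hS : S.Finite) :
    (Prod.snd '' S).ncard ≤ (lh S).ncard := by
  rw [← Set.ncard_image_of_injOn (gh_injOn S)]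
  exact Set.ncard_le_ncard (gh_mem S hS) (hS.subset fun p hp => hp.1)

lemma cols_le_lv (S : Set (ℤ × ℤ)) (hS : S.Finite) :
    (Prod.fst '' S).ncard ≤ (lv S).ncard := by
  rw [← Set.ncard_image_of_injOn (gv_injOn S)]
  exact Set.ncard_le_ncard (gv_mem S hS) (hS.subset fun p hp => hp.1)

lemma ncard_prod {α β : Type*} (s : Set α) (t : Set β) :
    (s ×ˢ t).ncard = s.ncard * t.ncard := by
  rw [← Nat.card_coe_set_eq, ← Nat.card_coe_set_eq, ← Nat.card_coe_set_eq,
    Nat.card_congr (Equiv.Set.prod s t), Nat.card_prod]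

/-- A finite set of integers in which every non-minimal element has a predecessor is an
interval. -/
lemma interval_of_pred (F : Set ℤ) (hF : F.Finite) (hne : F.Nonempty)
    (h : ∀ x ∈ F, x ≠ sInf F → x - 1 ∈ F) : F = Set.Icc (sInf F) (sSup F) := by
  have hbb := hF.bddBelow
  have hba := hF.bddAbove
  have hsup : sSup F ∈ F := hne.csSup_mem hF
  apply Set.Subset.antisymm
  · intro x hx
    exact ⟨csInf_le hbb hx, le_csSup hba hx⟩
  · have key : ∀ k : ℕ, ∀ y : ℤ, sInf F ≤ y → y ≤ sSup F → (sSup F - y).toNat = k → y ∈ F := by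
      intro k
      induction k with
      | zero =>
        intro y h1 h2 h3
        have : y = sSup F := by omega
        exact this ▸ hsup
      | succ k ih =>
        intro y h1 h2 h3
        have hy1 : y + 1 ∈ F := ih (y + 1) (by omega) (by omega) (by omega)
        have hinf : sInf F ≤ y := h1
        have hne' : y + 1 ≠ sInf F := by omega
        have := h _ hy1 hne'
        simpa using this
    intro y hy
    exact key (sSup F - y).toNat y hy.1 hy.2 rfl

lemma arith_key (n l1 l2 c r : ℕ) (hn : 0 < n) (hl1 : l1 ≤ n ^ 2) (hl2 : l2 ≤ n ^ 2)
    (hr : r ≤ l1) (hc : c ≤ l2) (h4 : n ^ 2 ≤ c * r)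
    (hlt : 2 * n * (n - 1) ≤ (n ^ 2 - l1) + (n ^ 2 - l2)) :
    c = n ∧ r = n ∧ l1 = n ∧ l2 = n := by
  have e2 : 2 * (n : ℤ) * ((n : ℤ) - 1) ≤ ((n : ℤ) ^ 2 - l1) + ((n : ℤ) ^ 2 - l2) := by
    have := hlt
    zify [hl1, hl2, hn] at this
    linarith
  have hra : (r : ℤ) ≤ (l1 : ℤ) := by exact_mod_cast hr
  have hcb : (c : ℤ) ≤ (l2 : ℤ) := by exact_mod_cast hc
  have hcr : (n : ℤ) ^ 2 ≤ (c : ℤ) * (r : ℤ) := by exact_mod_cast h4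
  have hc0 : (0 : ℤ) ≤ (c : ℤ) := Int.natCast_nonneg _
  have hr0 : (0 : ℤ) ≤ (r : ℤ) := Int.natCast_nonneg _
  have hn0 : (1 : ℤ) ≤ (n : ℤ) := by exact_mod_cast hn
  have hab : (l1 : ℤ) + (l2 : ℤ) ≤ 2 * (n : ℤ) := by nlinarith
  have hsumcr : (c : ℤ) + (r : ℤ) = 2 * (n : ℤ) := by
    have h5 : (c : ℤ) + r ≤ 2 * (n : ℤ) := by linarith
    have h6 : 2 * (n : ℤ) ≤ (c : ℤ) + r := by
      nlinarith [sq_nonneg ((c : ℤ) - r), sq_nonneg ((c : ℤ) + r - 2 * n)]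
    linarith
  have hceqr : (c : ℤ) = (r : ℤ) := by nlinarith [sq_nonneg ((c : ℤ) - r)]
  have hcn : (c : ℤ) = (n : ℤ) := by linarith
  have hrn : (r : ℤ) = (n : ℤ) := by linarith
  have han : (l1 : ℤ) = (n : ℤ) := by linarith
  have hbn : (l2 : ℤ) = (n : ℤ) := by linarith
  exact ⟨by exact_mod_cast hcn, by exact_mod_cast hrn, by exact_mod_cast han,
    by exact_mod_cast hbn⟩

lemma square_eq (n : ℕ) : square n = (Set.Ico (0 : ℤ) n) ×ˢ (Set.Ico (0 : ℤ) n) := by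
  ext p
  simp [square, Set.mem_prod, Set.mem_Ico, and_assoc]

lemma ncard_Ico (a b : ℤ) : (Set.Ico a b).ncard = (b - a).toNat := by
  rw [← Finset.coe_Ico, Set.ncard_coe_finset, Int.card_Ico]

lemma ncard_Icc (a b : ℤ) : (Set.Icc a b).ncard = (b + 1 - a).toNat := by
  rw [← Finset.coe_Icc, Set.ncard_coe_finset, Int.card_Icc]

lemma square_edges (n : ℕ) : intEdges2 (square n) = 2 * n * (n - 1) := by
  have hfin : (square n).Finite := by
    rw [square_eq]
    exact (Set.finite_Ico _ _).prod (Set.finite_Ico _ _)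
  rw [intEdges2_eq _ hfin]
  have hh : hset (square n) = (Set.Ico (0 : ℤ) ((n : ℤ) - 1)) ×ˢ (Set.Ico (0 : ℤ) n) := by
    ext ⟨a, b⟩
    simp only [hset, square, mem_setOf_eq, Prod.mk_add_mk, Set.mem_prod, Set.mem_Ico]
    omega
  have hv : vset (square n) = (Set.Ico (0 : ℤ) n) ×ˢ (Set.Ico (0 : ℤ) ((n : ℤ) - 1)) := by
    ext ⟨a, b⟩
    simp only [vset, square, mem_setOf_eq, Prod.mk_add_mk, Set.mem_prod, Set.mem_Ico]
    omega
  rw [hh, hv, ncard_prod, ncard_prod, ncard_Ico, ncard_Ico]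
  have h1 : ((n : ℤ) - 1 - 0).toNat = n - 1 := by omega
  have h2 : ((n : ℤ) - 0).toNat = n := by omega
  rw [h1, h2]
  cases n with
  | zero => simp
  | succ m => simp [Nat.succ_sub_one]; ring

end Stmt12Aux

open Stmt12Aux in
/-- Among all sets of cardinality `n²` in `ℤ²`, the `n × n` square (uniquely, up to
translation) maximizes the number of internal edges: any finite set of `n²` points that is
not a translate of the square has strictly fewer than `2n(n−1)` internal edges. -/
theorem stmt12 (n : ℕ) :
    intEdges2 (square n) = 2 * n * (n - 1) ∧
      ∀ S : Set (ℤ × ℤ), S.Finite → S.ncard = n ^ 2 →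
        (∀ v : ℤ × ℤ, S ≠ (fun p => p + v) '' square n) →
        intEdges2 S < 2 * n * (n - 1) := by
  refine ⟨square_edges n, ?_⟩
  intro S hfin hcard hne
  -- n = 0 case: contradiction
  rcases Nat.eq_zero_or_pos n with hn0 | hn
  · exfalso
    subst hn0
    have hS : S = ∅ := by
      rw [← Set.ncard_eq_zero hfin]; simpa using hcard
    apply hne 0
    rw [hS]
    have : square 0 = ∅ := by
      ext ⟨a, b⟩
      simp only [square, mem_setOf_eq, Set.mem_empty_iff_false, iff_false, not_and]
      intro h1 h2; omega
    simp [this]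
  by_contra hlt
  push_neg at hlt
  -- setup
  set X := Prod.fst '' S with hXdef
  set Y := Prod.snd '' S with hYdef
  have hXfin : X.Finite := hfin.image _
  have hYfin : Y.Finite := hfin.image _
  have hlhfin : (lh S).Finite := hfin.subset fun p hp => hp.1
  have hsub : S ⊆ X ×ˢ Y := fun p hp => ⟨⟨p, hp, rfl⟩, ⟨p, hp, rfl⟩⟩
  have h4 : n ^ 2 ≤ X.ncard * Y.ncard := by
    rw [← Stmt12Aux.ncard_prod, ← hcard]
    exact Set.ncard_le_ncard hsub (hXfin.prod hYfin)
  have hE : intEdges2 S = (n ^ 2 - (lh S).ncard) + (n ^ 2 - (lv S).ncard) := by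
    rw [intEdges2_eq S hfin, hset_ncard S hfin, vset_ncard S hfin, hcard]
  have hl1 : (lh S).ncard ≤ n ^ 2 := hcard ▸ Set.ncard_le_ncard (fun p hp => hp.1) hfin
  have hl2 : (lv S).ncard ≤ n ^ 2 := hcard ▸ Set.ncard_le_ncard (fun p hp => hp.1) hfin
  have hr : Y.ncard ≤ (lh S).ncard := rows_le_lh S hfin
  have hc : X.ncard ≤ (lv S).ncard := cols_le_lv S hfin
  have key : X.ncard = n ∧ Y.ncard = n ∧ (lh S).ncard = n ∧ (lv S).ncard = n :=
    arith_key n ((lh S).ncard) ((lv S).ncard) X.ncard Y.ncard hn hl1 hl2 hr hc h4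
      (hE ▸ hlt)
  obtain ⟨hXn, hYn, hlhn, hlvn⟩ := key
  -- S is a product
  have hSeq : S = X ×ˢ Y := by
    apply Set.eq_of_subset_of_ncard_le hsub _ (hXfin.prod hYfin)
    rw [Stmt12Aux.ncard_prod, hXn, hYn, hcard]; ring_nf; omega
  -- lh S is exactly the set of row-minima
  have hlh_eq : lh S = gh S '' Y := by
    refine (Set.eq_of_subset_of_ncard_le (gh_mem S hfin) ?_ hlhfin).symm
    rw [Set.ncard_image_of_injOn (gh_injOn S), hYn, hlhn]
  have hlv_eq : lv S = gv S '' X := by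
    refine (Set.eq_of_subset_of_ncard_le (gv_mem S hfin) ?_
      (hfin.subset fun p hp => hp.1)).symm
    rw [Set.ncard_image_of_injOn (gv_injOn S), hXn, hlvn]
  have hXne : X.Nonempty := by
    rw [Set.nonempty_iff_ne_empty]
    intro h; rw [h] at hXn; simp at hXn; omega
  have hYne : Y.Nonempty := by
    rw [Set.nonempty_iff_ne_empty]
    intro h; rw [h] at hYn; simp at hYn; omega
  -- fibers are X resp. Y
  have hfibX : ∀ y ∈ Y, {t : ℤ | (t, y) ∈ S} = X := by
    intro y hy
    ext t
    rw [hSeq]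
    simp [Set.mem_prod, hy]
  have hfibY : ∀ x ∈ X, {t : ℤ | (x, t) ∈ S} = Y := by
    intro x hx
    ext t
    rw [hSeq]
    simp [Set.mem_prod, hx]
  -- X has the predecessor property
  have hXpred : ∀ x ∈ X, x ≠ sInf X → x - 1 ∈ X := by
    intro x hx hxne
    obtain ⟨y, hy⟩ := hYne
    have hp : (x, y) ∈ S := by rw [hSeq]; exact ⟨hx, hy⟩
    have hnotlh : (x, y) ∉ lh S := by
      rw [hlh_eq]
      rintro ⟨y', hy', heq⟩
      have h1 : y' = y := congrArg Prod.snd heq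
      subst h1
      have h2 : sInf {t : ℤ | (t, y') ∈ S} = x := congrArg Prod.fst heq
      rw [hfibX y' hy'] at h2
      exact hxne h2.symm
    have : ¬ ((x, y) ∈ S ∧ (x, y) - (1, 0) ∉ S) := hnotlh
    push_neg at this
    have hmem := this hp
    have : ((x : ℤ) - 1, y) ∈ S := by
      simpa using hmem
    rw [hSeq] at this
    exact this.1
  have hYpred : ∀ y ∈ Y, y ≠ sInf Y → y - 1 ∈ Y := by
    intro y hy hyne
    obtain ⟨x, hx⟩ := hXne
    have hp : (x, y) ∈ S := by rw [hSeq]; exact ⟨hx, hy⟩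
    have hnotlv : (x, y) ∉ lv S := by
      rw [hlv_eq]
      rintro ⟨x', hx', heq⟩
      have h1 : x' = x := congrArg Prod.fst heq
      subst h1
      have h2 : sInf {t : ℤ | (x', t) ∈ S} = y := congrArg Prod.snd heq
      rw [hfibY x' hx'] at h2
      exact hyne h2.symm
    have : ¬ ((x, y) ∈ S ∧ (x, y) - (0, 1) ∉ S) := hnotlv
    push_neg at this
    have hmem := this hp
    have : ((x : ℤ), y - 1) ∈ S := by
      simpa using hmem
    rw [hSeq] at this
    exact this.2
  -- X and Y are intervals
  have hXicc : X = Set.Icc (sInf X) (sInf X + (n : ℤ) - 1) := by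
    have h1 := interval_of_pred X hXfin hXne hXpred
    have h2 : (sSup X + 1 - sInf X).toNat = n := by
      rw [← ncard_Icc, ← h1, hXn]
    have h3 : sInf X ≤ sSup X := csInf_le_csSup hXne hXfin.bddBelow hXfin.bddAbove
    have h4 : sSup X = sInf X + (n : ℤ) - 1 := by omega
    rw [← h4]; exact h1
  have hYicc : Y = Set.Icc (sInf Y) (sInf Y + (n : ℤ) - 1) := by
    have h1 := interval_of_pred Y hYfin hYne hYpred
    have h2 : (sSup Y + 1 - sInf Y).toNat = n := by
      rw [← ncard_Icc, ← h1, hYn]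
    have h3 : sInf Y ≤ sSup Y := csInf_le_csSup hYne hYfin.bddBelow hYfin.bddAbove
    have h4 : sSup Y = sInf Y + (n : ℤ) - 1 := by omega
    rw [← h4]; exact h1
  -- S is a translate of the square: contradiction
  obtain ⟨a, b, hXab, hYab⟩ :
      ∃ a b : ℤ, X = Set.Icc a (a + (n : ℤ) - 1) ∧ Y = Set.Icc b (b + (n : ℤ) - 1) :=
    ⟨_, _, hXicc, hYicc⟩
  apply hne (a, b)
  rw [hSeq, hXab, hYab]
  ext ⟨u, v⟩
  simp only [Set.mem_prod, Set.mem_Icc, Set.mem_image, square, mem_setOf_eq,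
    Prod.mk_add_mk, Prod.mk.injEq, Prod.exists]
  constructor
  · rintro ⟨⟨h1, h2⟩, h3, h4⟩
    exact ⟨u - a, v - b, ⟨by omega, by omega, by omega, by omega⟩, by omega, by omega⟩
  · rintro ⟨s, t, ⟨k1, k2, k3, k4⟩, k5, k6⟩
    refine ⟨⟨by omega, by omega⟩, by omega, by omega⟩
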